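/- arXiv:1704.04256 — 2 statements merged into one kernel-verified Lean document; each statement's English description precedes it below -/
import Mathlib

section
/- Let d, δ, v be positive integers with δ dividing d. If v^n divides d^n/δ^(n-1) for all positive integers n, then v divides d/δ. -/
/-! Write `d = δ m`, so that `d ^ n / δ ^ (n - 1) = δ m ^ n`. Comparing `p`-adic valuations in
`v ^ n ∣ δ m ^ n` gives `n v_p(v) ≤ v_p(δ) + n v_p(m)` for every `n`, and for `n > v_p(δ)` this
forces `v_p(v) ≤ v_p(m)`. -/

theorem Nat.mul_pow_div_pow_sub_one {δ m n : ℕ} (hδ : δ ≠ 0) (hn : 0 < n) :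
    (δ * m) ^ n / δ ^ (n - 1) = δ * m ^ n := by
  obtain ⟨k, rfl⟩ : ∃ k, n = k + 1 := ⟨n - 1, by omega⟩
  rw [Nat.add_sub_cancel, mul_pow, pow_succ, mul_assoc,
    Nat.mul_div_cancel_left _ (pow_pos (Nat.pos_of_ne_zero hδ) k)]

theorem Nat.dvd_of_forall_pow_dvd_mul_pow {δ v m : ℕ} (hδ : δ ≠ 0)
    (h : ∀ n, 0 < n → v ^ n ∣ δ * m ^ n) : v ∣ m := by
  rcases eq_or_ne m 0 with rfl | hm
  · exact dvd_zero v
  rcases eq_or_ne v 0 with rfl | hv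
  · simpa [hδ, hm] using h 1 one_pos
  rw [← Nat.factorization_le_iff_dvd hv hm]
  intro p
  have hval : ∀ n, 0 < n → n * v.factorization p ≤ δ.factorization p + n * m.factorization p := by
    intro n hn
    have := (Nat.factorization_le_iff_dvd (pow_ne_zero n hv)
      (mul_ne_zero hδ (pow_ne_zero n hm))).2 (h n hn) p
    simpa [Nat.factorization_mul hδ (pow_ne_zero n hm), Nat.factorization_pow] using this
  by_contra! hlt
  have := hval (δ.factorization p + 1) (Nat.succ_pos _)
  nlinarith

theorem stmt_1_general (d δ v : ℕ) (hδ : 0 < δ) (hdvd : δ ∣ d)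
    (h : ∀ n : ℕ, 0 < n → v ^ n ∣ d ^ n / δ ^ (n - 1)) :
    v ∣ d / δ := by
  obtain ⟨m, rfl⟩ := hdvd
  rw [Nat.mul_div_cancel_left m hδ]
  refine Nat.dvd_of_forall_pow_dvd_mul_pow hδ.ne' fun n hn => ?_
  simpa only [Nat.mul_pow_div_pow_sub_one hδ.ne' hn] using h n hn

/-- If `δ ∣ d` and `v ^ n ∣ d ^ n / δ ^ (n - 1)` for all `n ≥ 1`, then `v ∣ d / δ`. -/
theorem stmt_1 (d δ v : ℕ) (hd : 0 < d) (hδ : 0 < δ) (hv : 0 < v) (hdvd : δ ∣ d)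
    (h : ∀ n : ℕ, 0 < n → v ^ n ∣ d ^ n / δ ^ (n - 1)) :
    v ∣ d / δ :=
  stmt_1_general d δ v hδ hdvd h
end

section
/- Let H be a Hopf algebra over a field k and let K, L be Hopf subalgebras of H. Then every element of K commutes with every element of L if and only if the Hopf commutator [l,k] := l₍₁₎k₍₁₎S(l₍₂₎)S(k₍₂₎) equals ε(l)ε(k)·1 for all k ∈ K and l ∈ L. -/
open TensorProduct

/-- The Hopf commutator `[h,g] = h₍₁₎g₍₁₎S(h₍₂₎)S(g₍₂₎)` of two elements of a Hopf algebra. -/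
noncomputable def hopfComm (k : Type*) {H : Type*} [CommRing k] [Ring H] [HopfAlgebra k H]
    (h g : H) : H :=
  (LinearMap.mul' k H ∘ₗ
    TensorProduct.map (LinearMap.mul' k H)
      (LinearMap.mul' k H ∘ₗ
        TensorProduct.map (HopfAlgebra.antipode (R := k)) (HopfAlgebra.antipode (R := k))) ∘ₗ
    (TensorProduct.tensorTensorTensorComm k H H H H).toLinearMap)
  (Coalgebra.comul (R := k) h ⊗ₜ[k] Coalgebra.comul (R := k) g)

/-- A subalgebra of a Hopf algebra which is closed under comultiplication and the antipode,
i.e. a Hopf subalgebra. -/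
def IsHopfSubalgebra (k : Type*) {H : Type*} [CommRing k] [Ring H] [HopfAlgebra k H]
    (K : Subalgebra k H) : Prop :=
  (∀ x ∈ K, Coalgebra.comul (R := k) x ∈
      LinearMap.range (TensorProduct.map K.toSubmodule.subtype K.toSubmodule.subtype)) ∧
    ∀ x ∈ K, HopfAlgebra.antipode (R := k) x ∈ K

/-! Write `Δx = x₁ ⊗ x₂`. If `K` and `L` commute, then `x₁ ∈ K` commutes with `S(y₂) ∈ L`, so
`[y,x] = y₁S(y₂) · x₁S(x₂) = ε(y)ε(x)`. Conversely, in every Hopf algebra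
`y x = [y₁,x₁] x₂ y₂`, by applying `x₁ ⊗ S(x₂)x₃ = x ⊗ 1` and then `y₁ ⊗ S(y₂)y₃ = y ⊗ 1` to the
expanded commutator. With trivial commutators the right-hand side becomes `ε(y₁)ε(x₁) x₂ y₂ = x y`. -/

open Coalgebra (Repr comul counit)
open HopfAlgebra

lemma exists_repr_of_comul_mem_range {R A : Type*} [CommSemiring R] [AddCommMonoid A]
    [Module R A] [CoalgebraStruct R A] {p : Submodule R A} {a : A}
    (ha : comul a ∈ LinearMap.range (TensorProduct.map p.subtype p.subtype)) :
    ∃ r : Repr R a (p × p), (∀ i, r.left i ∈ p) ∧ ∀ i, r.right i ∈ p := by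
  obtain ⟨t, ht⟩ := ha
  obtain ⟨s, rfl⟩ := TensorProduct.exists_finset t
  exact ⟨⟨s, fun i ↦ i.1, fun i ↦ i.2, by simpa [map_sum] using ht⟩, fun i ↦ i.1.2, fun i ↦ i.2.2⟩

section

variable {k H : Type*} [CommSemiring k] [Semiring H] [HopfAlgebra k H] {ι κ : Type*}

lemma sum_tmul_antipode_mul {z : H} (rz : Repr k z ι) (r : ∀ i, Repr k (rz.left i) κ) :
    ∑ i ∈ rz.index, ∑ q ∈ (r i).index,
      (r i).left q ⊗ₜ[k] (antipode k ((r i).right q) * rz.right i) = z ⊗ₜ[k] (1 : H) := by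
  have coassoc := congrArg (TensorProduct.map LinearMap.id
      (LinearMap.mul' k H ∘ₗ (antipode k).rTensor H))
    (Coalgebra.sum_tmul_tmul_eq rz r fun i ↦ Repr.arbitrary k (rz.right i))
  simp only [map_sum, TensorProduct.map_tmul, LinearMap.id_coe, id_eq, LinearMap.coe_comp,
    Function.comp_apply, LinearMap.rTensor_tmul, LinearMap.mul'_apply] at coassoc
  have counit_right := congrArg ((Algebra.linearMap k H).lTensor H)
    (Coalgebra.sum_tmul_counit_eq rz)
  simp only [map_sum, LinearMap.lTensor_tmul, Algebra.linearMap_apply, map_one] at counit_right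
  simpa only [coassoc, ← TensorProduct.tmul_sum, sum_antipode_mul_eq_algebraMap_counit]

lemma sum_mul_mul_antipode_mul {z : H} (rz : Repr k z ι) (r : ∀ i, Repr k (rz.left i) κ)
    (a b c : H) :
    ∑ i ∈ rz.index, ∑ q ∈ (r i).index,
      a * (r i).left q * b * (antipode k ((r i).right q) * rz.right i) * c = a * z * b * c := by
  simpa [map_sum, mul_assoc] using congrArg (LinearMap.mul' k H ∘ₗ
    TensorProduct.map (LinearMap.mulLeft k a ∘ₗ LinearMap.mulRight k b) (LinearMap.mulRight k c))
    (sum_tmul_antipode_mul rz r)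

end

section

variable {k H : Type*} [CommRing k] [Ring H] [HopfAlgebra k H] {ι κ : Type*}

lemma hopfComm_eq_sum {x y : H} (rx : Repr k x ι) (ry : Repr k y κ) :
    hopfComm k y x = ∑ j ∈ ry.index, ∑ i ∈ rx.index,
      ry.left j * rx.left i * (antipode k (ry.right j) * antipode k (rx.right i)) := by
  rw [hopfComm, ← rx.eq, ← ry.eq]
  simp only [TensorProduct.sum_tmul, TensorProduct.tmul_sum, map_sum, LinearMap.coe_comp,
    LinearEquiv.coe_coe, Function.comp_apply, TensorProduct.tensorTensorTensorComm_tmul,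
    TensorProduct.map_tmul, LinearMap.mul'_apply]
  exact Finset.sum_comm

lemma hopfComm_eq_smul_one_of_commute {x y : H} (rx : Repr k x ι) (ry : Repr k y κ)
    (h : ∀ i j, Commute (rx.left i) (antipode k (ry.right j))) :
    hopfComm k y x = (counit (R := k) y * counit (R := k) x) • (1 : H) := by
  have regroup : ∀ i j, ry.left j * rx.left i * (antipode k (ry.right j) * antipode k (rx.right i))
      = ry.left j * antipode k (ry.right j) * (rx.left i * antipode k (rx.right i)) := fun i j ↦ by
    simp only [mul_assoc, (h i j).left_comm]
  simp only [hopfComm_eq_sum rx ry, regroup, ← Finset.sum_mul_sum, sum_mul_antipode_eq_smul,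
    smul_mul_smul_comm, mul_one]

lemma sum_hopfComm_mul_mul {x y : H} (rx : Repr k x ι) (ry : Repr k y κ) :
    ∑ j ∈ ry.index, ∑ i ∈ rx.index,
      hopfComm k (ry.left j) (rx.left i) * rx.right i * ry.right j = y * x := by
  let rX i := Repr.arbitrary k (rx.left i)
  let rY j := Repr.arbitrary k (ry.left j)
  calc _ = ∑ j ∈ ry.index, ∑ p ∈ (rY j).index, ∑ i ∈ rx.index, ∑ q ∈ (rX i).index,
          (rY j).left p * (rX i).left q * antipode k ((rY j).right p) *
            (antipode k ((rX i).right q) * rx.right i) * ry.right j := by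
        simp only [hopfComm_eq_sum (rX _) (rY _), Finset.sum_mul]
        refine Finset.sum_congr rfl fun j _ ↦ ?_
        rw [Finset.sum_comm]
        simp only [mul_assoc]
    _ = ∑ j ∈ ry.index, ∑ p ∈ (rY j).index,
          (rY j).left p * x * (antipode k ((rY j).right p) * ry.right j) := by
        simp only [sum_mul_mul_antipode_mul rx rX]
        simp only [mul_assoc]
    _ = y * x := by simpa only [one_mul, mul_one] using sum_mul_mul_antipode_mul ry rY 1 x 1

lemma commute_of_hopfComm_eq_smul_one {x y : H} (rx : Repr k x ι) (ry : Repr k y κ)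
    (h : ∀ i j, hopfComm k (ry.left j) (rx.left i) =
      (counit (R := k) (ry.left j) * counit (R := k) (rx.left i)) • (1 : H)) :
    Commute x y := by
  calc x * y = (∑ i ∈ rx.index, counit (R := k) (rx.left i) • rx.right i) *
        ∑ j ∈ ry.index, counit (R := k) (ry.left j) • ry.right j := by
        rw [Coalgebra.sum_counit_smul, Coalgebra.sum_counit_smul]
    _ = ∑ j ∈ ry.index, ∑ i ∈ rx.index,
        hopfComm k (ry.left j) (rx.left i) * rx.right i * ry.right j := by
        rw [Finset.sum_mul_sum, Finset.sum_comm]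
        simp only [h, smul_mul_assoc, mul_smul_comm, one_mul, smul_smul, mul_comm]
    _ = y * x := sum_hopfComm_mul_mul rx ry

end

/-- Two Hopf subalgebras `K`, `L` of a Hopf algebra `H` commute elementwise if and only if
all Hopf commutators `[l,k]` with `l ∈ L`, `k ∈ K` equal `ε(l)ε(k)·1`. -/
theorem stmt_2 (k H : Type*) [Field k] [Ring H] [HopfAlgebra k H]
    (K L : Subalgebra k H) (hK : IsHopfSubalgebra k K) (hL : IsHopfSubalgebra k L) :
    (∀ x ∈ K, ∀ y ∈ L, x * y = y * x) ↔
      ∀ x ∈ K, ∀ y ∈ L,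
        hopfComm k y x =
          (Coalgebra.counit (R := k) y * Coalgebra.counit (R := k) x) • (1 : H) := by
  constructor
  · intro hcomm x hx y hy
    obtain ⟨rx, hxl, -⟩ := exists_repr_of_comul_mem_range (hK.1 x hx)
    obtain ⟨ry, -, hyr⟩ := exists_repr_of_comul_mem_range (hL.1 y hy)
    exact hopfComm_eq_smul_one_of_commute rx ry fun i j ↦ hcomm _ (hxl i) _ (hL.2 _ (hyr j))
  · intro hcomm x hx y hy
    obtain ⟨rx, hxl, -⟩ := exists_repr_of_comul_mem_range (hK.1 x hx)
    obtain ⟨ry, hyl, -⟩ := exists_repr_of_comul_mem_range (hL.1 y hy)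
    exact commute_of_hopfComm_eq_smul_one rx ry fun i j ↦ hcomm _ (hxl i) _ (hyl j)
end
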